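/- Let G be a directed multigraph and E a minimum-weight Eulerian extension of G with respect to a weight function ω obtained after shortest-path preprocessing (ω satisfies the triangle inequality: ω(u,w) ≤ ω(u,v) + ω(v,w) for all vertices u, v, w). Then there exists an Eulerian extension E' of G with ω(E') ≤ ω(E) such that every maximal trail in E' visits every vertex at most once (i.e., each maximal trail is a path or a cycle). -/

import Mathlib

/-!
Shortcutting two consecutive arcs `(x,y), (y,z)` of a trail by the arc `(x,z)` does not increase
the weight, by the triangle inequality, and removes one arc. It keeps the graph Eulerian as long as
`y` still lies on the shortened trail: the Euler tour then falls apart into a closed walk through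
`y` and a closed walk through the new arc `(x,z)`, and the shortened trail, which runs from the
second one to `y`, forces the two to share a vertex, where they can be spliced back together.
A trail that repeats a vertex always contains such a pair of arcs, so shortcutting until no trail
repeats a vertex terminates.
-/

namespace Stmt15

variable {V : Type*}

def IsWalkFrom : V → V → List (V × V) → Prop
  | u, w, [] => u = w
  | u, w, a :: L => a.1 = u ∧ IsWalkFrom a.2 w L

def IsEulerian (A : Multiset (V × V)) : Prop :=
  ∃ (v : V) (L : List (V × V)), IsWalkFrom v v L ∧ (↑L : Multiset (V × V)) = A ∧
    ∀ x : V, x = v ∨ ∃ a ∈ L, a.1 = x ∨ a.2 = x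

/-- Total weight of a multiset of arcs. -/
def wgt (ω : V × V → NNReal) (E : Multiset (V × V)) : NNReal :=
  (E.map ω).sum

def Visits (M : Multiset (V × V)) (x : V) : Prop :=
  ∃ a ∈ M, a.1 = x ∨ a.2 = x

def IsPathOrCycle (v w : V) (L : List (V × V)) : Prop :=
  (L.map Prod.snd).Nodup ∧ (v = w ∨ v ∉ L.map Prod.snd)

/-- The arcs `(x,y), (y,z)` of `L` may be replaced by `(x,z)` without losing the vertex `y`. -/
def HasShortcut (L : List (V × V)) : Prop :=
  ∃ x y z P S, L = P ++ (x, y) :: (y, z) :: S ∧ Visits ↑(P ++ (x, z) :: S) y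

theorem visits_cons {a : V × V} {M : Multiset (V × V)} {x : V} :
    Visits (a ::ₘ M) x ↔ a.1 = x ∨ a.2 = x ∨ Visits M x := by
  simp [Visits, or_assoc]

theorem Visits.mono {M N : Multiset (V × V)} {x : V} (h : Visits M x)
    (hMN : ∀ a ∈ M, a ∈ N) :
    Visits N x :=
  let ⟨a, ha, hax⟩ := h
  ⟨a, hMN a ha, hax⟩

theorem coe_append_cons (P S : List (V × V)) (a : V × V) :
    (↑(P ++ a :: S) : Multiset (V × V)) = a ::ₘ (↑P + ↑S) := by
  rw [Multiset.coe_add, Multiset.cons_coe]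
  exact Multiset.coe_eq_coe.2 List.perm_middle

namespace IsWalkFrom

theorem append {L₁ L₂ : List (V × V)} {u m w : V}
    (h₁ : IsWalkFrom u m L₁) (h₂ : IsWalkFrom m w L₂) : IsWalkFrom u w (L₁ ++ L₂) := by
  induction L₁ generalizing u with
  | nil => exact h₁ ▸ h₂
  | cons a T ih => exact ⟨h₁.1, ih h₁.2⟩

theorem of_append {L₁ L₂ : List (V × V)} {u w : V} (h : IsWalkFrom u w (L₁ ++ L₂)) :
    ∃ m, IsWalkFrom u m L₁ ∧ IsWalkFrom m w L₂ := by
  induction L₁ generalizing u with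
  | nil => exact ⟨u, rfl, h⟩
  | cons a T ih =>
    obtain ⟨m, h₁, h₂⟩ := ih h.2
    exact ⟨m, ⟨h.1, h₁⟩, h₂⟩

theorem exists_split_of_mem {L : List (V × V)} {u w : V} (h : IsWalkFrom u w L) {a : V × V}
    (ha : a ∈ L) :
    ∃ L₁ L₂, L = L₁ ++ a :: L₂ ∧ IsWalkFrom u a.1 L₁ ∧ IsWalkFrom a.2 w L₂ := by
  obtain ⟨L₁, L₂, rfl⟩ := List.append_of_mem ha
  obtain ⟨m, h₁, hm, h₂⟩ := h.of_append
  exact ⟨L₁, L₂, rfl, hm ▸ h₁, h₂⟩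

theorem exists_split_of_visits {L : List (V × V)} {u w m : V} (h : IsWalkFrom u w L)
    (hm : Visits ↑L m) :
    ∃ L₁ L₂, L = L₁ ++ L₂ ∧ IsWalkFrom u m L₁ ∧ IsWalkFrom m w L₂ := by
  obtain ⟨a, ha, rfl | rfl⟩ := hm
  · obtain ⟨L₁, L₂, rfl, h₁, h₂⟩ := h.exists_split_of_mem ha
    exact ⟨L₁, a :: L₂, rfl, h₁, rfl, h₂⟩
  · obtain ⟨L₁, L₂, rfl, h₁, h₂⟩ := h.exists_split_of_mem ha
    exact ⟨L₁ ++ [a], L₂, by simp, h₁.append ⟨rfl, rfl⟩, h₂⟩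

theorem exists_rotate {L : List (V × V)} {v m : V} (h : IsWalkFrom v v L)
    (hm : m = v ∨ Visits ↑L m) :
    ∃ L', IsWalkFrom m m L' ∧ (↑L' : Multiset (V × V)) = ↑L := by
  rcases hm with rfl | hm
  · exact ⟨L, h, rfl⟩
  obtain ⟨L₁, L₂, rfl, h₁, h₂⟩ := h.exists_split_of_visits hm
  exact ⟨L₂ ++ L₁, h₂.append h₁, Multiset.coe_eq_coe.2 List.perm_append_comm⟩

theorem visits_start {L : List (V × V)} {u w : V} (h : IsWalkFrom u w L) (hL : L ≠ []) :
    Visits ↑L u := by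
  obtain _ | ⟨a, T⟩ := L
  · exact absurd rfl hL
  · exact ⟨a, List.mem_cons_self .., Or.inl h.1⟩

theorem iff_of_mem {Z : V → Prop} {L : List (V × V)} {u w : V} (h : IsWalkFrom u w L)
    (hZ : ∀ a ∈ L, Z a.1 ↔ Z a.2) : ∀ a ∈ L, Z a.1 ↔ Z u := by
  induction L generalizing u with
  | nil => simp
  | cons b T ih =>
    obtain ⟨rfl, hT⟩ := h
    intro a ha
    rcases List.mem_cons.1 ha with rfl | ha
    · rfl
    · exact (ih hT (fun c hc => hZ c (List.mem_cons_of_mem _ hc)) a ha).trans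
        (hZ b List.mem_cons_self).symm

theorem shortcut {P S : List (V × V)} {v w x y z : V}
    (h : IsWalkFrom v w (P ++ (x, y) :: (y, z) :: S)) : IsWalkFrom v w (P ++ (x, z) :: S) := by
  obtain ⟨m, hP, rfl, -, hS⟩ := h.of_append
  exact hP.append ⟨rfl, hS⟩

end IsWalkFrom

theorem exists_closed_walk_of_closed_walks {C₁ C₂ : List (V × V)} {a b m : V}
    (h₁ : IsWalkFrom a a C₁) (h₂ : IsWalkFrom b b C₂)
    (hm₁ : m = a ∨ Visits ↑C₁ m) (hm₂ : m = b ∨ Visits ↑C₂ m) :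
    ∃ C, IsWalkFrom m m C ∧ (↑C : Multiset (V × V)) = ↑C₁ + ↑C₂ := by
  obtain ⟨D₁, hD₁, hD₁C⟩ := h₁.exists_rotate hm₁
  obtain ⟨D₂, hD₂, hD₂C⟩ := h₂.exists_rotate hm₂
  exact ⟨D₁ ++ D₂, hD₁.append hD₂, by rw [← Multiset.coe_add, hD₁C, hD₂C]⟩

theorem visits_or_exists_common_visit {Q C₁ C₂ : List (V × V)} {u w y : V} {a : V × V}
    (hQ : IsWalkFrom u w Q) (hQC : ∀ b ∈ Q, b ∈ C₁ ∨ b ∈ C₂)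
    (ha : a ∈ Q) (haC : a ∈ C₂) (hy : Visits ↑Q y) :
    Visits ↑C₂ y ∨ ∃ m : V, Visits ↑C₁ m ∧ Visits ↑C₂ m := by
  by_contra! ⟨hyC, hdisj⟩
  have hZ : ∀ b ∈ Q, Visits ↑C₂ b.1 ↔ Visits ↑C₂ b.2 := by
    intro b hb
    rcases hQC b hb with hb₁ | hb₂
    · exact iff_of_false (hdisj _ ⟨b, hb₁, Or.inl rfl⟩) (hdisj _ ⟨b, hb₁, Or.inr rfl⟩)
    · exact iff_of_true ⟨b, hb₂, Or.inl rfl⟩ ⟨b, hb₂, Or.inr rfl⟩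
  have hconst := hQ.iff_of_mem hZ
  have hu : Visits ↑C₂ u := (hconst a ha).1 ⟨a, haC, Or.inl rfl⟩
  obtain ⟨b, hb, rfl | rfl⟩ := hy
  · exact hyC ((hconst b hb).2 hu)
  · exact hyC ((hZ b hb).1 ((hconst b hb).2 hu))

theorem IsEulerian.visits {M : Multiset (V × V)} (hM : IsEulerian M) (hne : M ≠ 0) (x : V) :
    Visits M x := by
  obtain ⟨v, L, hL, rfl, hcov⟩ := hM
  rcases hcov x with rfl | hx
  · exact hL.visits_start (by rintro rfl; exact hne rfl)
  · exact hx

theorem exists_closed_walk_shortcut {W Q : List (V × V)} {N : Multiset (V × V)}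
    {v₀ v w x y z : V}
    (hW : IsWalkFrom v₀ v₀ W) (hWN : (↑W : Multiset (V × V)) = (x, y) ::ₘ (y, z) ::ₘ N)
    (hQ : IsWalkFrom v w Q) (hxz : (x, z) ∈ Q) (hQN : ∀ a ∈ Q, a ∈ (x, z) ::ₘ N)
    (hy : Visits ↑Q y) :
    ∃ (m : V) (C : List (V × V)),
      IsWalkFrom m m C ∧ (↑C : Multiset (V × V)) = (x, z) ::ₘ N := by
  obtain ⟨W₁, W₂, rfl, hW₁, hW₂⟩ :=
    hW.exists_split_of_mem (a := (x, y)) (by simp [← Multiset.mem_coe, hWN])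
  have hR : (↑(W₂ ++ W₁) : Multiset (V × V)) = (y, z) ::ₘ N := by
    rw [← Multiset.cons_inj_right (x, y), ← hWN, coe_append_cons, add_comm, Multiset.coe_add]
  obtain ⟨R₁, R₂, hR₁₂, hR₁, hR₂⟩ :=
    (hW₂.append hW₁).exists_split_of_mem (a := (y, z)) (by simp [← Multiset.mem_coe, hR])
  have hN : (↑R₁ + ↑R₂ : Multiset (V × V)) = N := by
    rw [← Multiset.cons_inj_right (y, z), ← hR, hR₁₂, coe_append_cons]
  -- The tour without `(x,y), (y,z)` is the closed walk `R₁` at `y` and the walk `R₂` from `z`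
  -- to `x`, which the new arc `(x,z)` closes up.
  have hC₂ : IsWalkFrom x x ((x, z) :: R₂) := ⟨rfl, hR₂⟩
  have hm : ∃ m, (m = y ∨ Visits ↑R₁ m) ∧ (m = x ∨ Visits ↑((x, z) :: R₂) m) := by
    have hQC : ∀ b ∈ Q, b ∈ R₁ ∨ b ∈ (x, z) :: R₂ := fun b hb => by
      simpa [← hN, or_left_comm] using hQN b hb
    rcases visits_or_exists_common_visit hQ hQC hxz List.mem_cons_self hy with
      hy | ⟨m, hm₁, hm₂⟩
    · exact ⟨y, Or.inl rfl, Or.inr hy⟩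
    · exact ⟨m, Or.inr hm₁, Or.inr hm₂⟩
  obtain ⟨m, hm₁, hm₂⟩ := hm
  obtain ⟨C, hC, hCR⟩ := exists_closed_walk_of_closed_walks hR₁ hC₂ hm₁ hm₂
  refine ⟨m, C, hC, ?_⟩
  rw [hCR, ← Multiset.cons_coe, Multiset.add_cons, hN]

theorem visits_shortcut {N : Multiset (V × V)} {x y z : V}
    (hcov : ∀ u, Visits ((x, y) ::ₘ (y, z) ::ₘ N) u) (hy : Visits ((x, z) ::ₘ N) y)
    (u : V) :
    Visits ((x, z) ::ₘ N) u := by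
  rcases visits_cons.1 (hcov u) with rfl | rfl | h
  · exact visits_cons.2 (Or.inl rfl)
  · exact hy
  · rcases visits_cons.1 h with rfl | rfl | h
    · exact hy
    · exact visits_cons.2 (Or.inr (Or.inl rfl))
    · exact visits_cons.2 (Or.inr (Or.inr h))

theorem IsEulerian.shortcut {N : Multiset (V × V)} {Q : List (V × V)} {v w x y z : V}
    (hM : IsEulerian ((x, y) ::ₘ (y, z) ::ₘ N))
    (hQ : IsWalkFrom v w Q) (hxz : (x, z) ∈ Q) (hQN : ∀ a ∈ Q, a ∈ (x, z) ::ₘ N)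
    (hy : Visits ↑Q y) : IsEulerian ((x, z) ::ₘ N) := by
  have hcov := visits_shortcut (hM.visits Multiset.cons_ne_zero) (hy.mono hQN)
  obtain ⟨v₀, W, hW, hWN, -⟩ := hM
  obtain ⟨m, C, hC, hCN⟩ := exists_closed_walk_shortcut hW hWN hQ hxz hQN hy
  exact ⟨m, C, hC, hCN, fun u => Or.inr (hCN ▸ hcov u : Visits ↑C u)⟩

theorem HasShortcut.cons {L : List (V × V)} (h : HasShortcut L) (a : V × V) :
    HasShortcut (a :: L) := by
  obtain ⟨x, y, z, P, S, rfl, hy⟩ := h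
  exact ⟨x, y, z, a :: P, S, rfl, hy.mono fun b hb => by simp_all⟩

theorem hasShortcut_of_not_nodup {L : List (V × V)} {v w : V} (hL : IsWalkFrom v w L)
    (h : ¬(L.map Prod.snd).Nodup) : HasShortcut L := by
  induction L generalizing v with
  | nil => simp at h
  | cons a T ih =>
    by_cases ha : a.2 ∈ T.map Prod.snd
    · obtain _ | ⟨f, S⟩ := T
      · simp at ha
      have hf : f = (a.2, f.2) := Prod.ext hL.2.1 rfl
      refine ⟨a.1, a.2, f.2, [], S, by rw [← hf]; rfl, ?_⟩
      obtain ⟨c, hc, hca⟩ := List.mem_map.1 ha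
      rcases List.mem_cons.1 hc with rfl | hc
      · exact ⟨(a.1, c.2), by simp, Or.inr hca⟩
      · exact ⟨c, by simp [hc], Or.inr hca⟩
    · exact (ih hL.2 fun hT => h (List.nodup_cons.2 ⟨ha, hT⟩)).cons a

theorem hasShortcut_of_mem_of_ne {L : List (V × V)} {v w : V} (hL : IsWalkFrom v w L)
    (hv : v ∈ L.map Prod.snd) (hvw : v ≠ w) : HasShortcut L := by
  obtain ⟨e, he, rfl⟩ := List.mem_map.1 hv
  obtain ⟨P, T, rfl, hP, hT⟩ := hL.exists_split_of_mem he
  obtain _ | ⟨f, S⟩ := T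
  · exact absurd hT hvw
  have hf : f = (e.2, f.2) := Prod.ext hT.1 rfl
  refine ⟨e.1, e.2, f.2, P, S, by rw [← hf], ?_⟩
  obtain _ | ⟨g, P'⟩ := P
  · exact ⟨(e.1, f.2), by simp, Or.inl hP.symm⟩
  · exact ⟨g, by simp, Or.inl hP.1⟩

theorem hasShortcut_of_not_isPathOrCycle {L : List (V × V)} {v w : V} (hL : IsWalkFrom v w L)
    (h : ¬IsPathOrCycle v w L) : HasShortcut L := by
  by_cases hnd : (L.map Prod.snd).Nodup
  · obtain ⟨hvw, hv⟩ : v ≠ w ∧ v ∈ L.map Prod.snd := by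
      simpa [IsPathOrCycle, hnd, not_or] using h
    exact hasShortcut_of_mem_of_ne hL hv hvw
  · exact hasShortcut_of_not_nodup hL hnd

theorem wgt_cons (ω : V × V → NNReal) (a : V × V) (M : Multiset (V × V)) :
    wgt ω (a ::ₘ M) = ω a + wgt ω M := by
  simp [wgt]

theorem exists_shorter_extension {A E : Multiset (V × V)} {ω : V × V → NNReal}
    (htri : ∀ u v w : V, ω (u, w) ≤ ω (u, v) + ω (v, w)) (hE : IsEulerian (A + E))
    {L : List (V × V)} {v w : V} (hL : IsWalkFrom v w L) (hLE : (↑L : Multiset (V × V)) ≤ E)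
    (hsc : HasShortcut L) :
    ∃ E₂, IsEulerian (A + E₂) ∧ wgt ω E₂ ≤ wgt ω E ∧
      Multiset.card E₂ < Multiset.card E := by
  obtain ⟨x, y, z, P, S, rfl, hy⟩ := hsc
  obtain ⟨U, rfl⟩ := Multiset.le_iff_exists_add.1 hLE
  set N : Multiset (V × V) := ↑P + ↑S + U
  have hEN : ↑(P ++ (x, y) :: (y, z) :: S) + U = (x, y) ::ₘ (y, z) ::ₘ N := by
    rw [coe_append_cons, ← Multiset.cons_coe, Multiset.add_cons, Multiset.cons_add,
      Multiset.cons_add]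
  refine ⟨(x, z) ::ₘ N, ?_, ?_, ?_⟩
  · rw [hEN, Multiset.add_cons, Multiset.add_cons] at hE
    rw [Multiset.add_cons]
    refine hE.shortcut hL.shortcut (by simp) (fun a ha => ?_) hy
    simp only [List.mem_append, List.mem_cons] at ha
    simp only [Multiset.mem_cons, Multiset.mem_add, Multiset.mem_coe, N]
    tauto
  · rw [hEN, wgt_cons, wgt_cons, wgt_cons, ← add_assoc]
    exact add_le_add_left (htri x y z) _
  · simp [hEN]

theorem exists_extension_forall_isPathOrCycle {A : Multiset (V × V)} {ω : V × V → NNReal}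
    (htri : ∀ u v w : V, ω (u, w) ≤ ω (u, v) + ω (v, w)) (E : Multiset (V × V))
    (hE : IsEulerian (A + E)) :
    ∃ E', IsEulerian (A + E') ∧ wgt ω E' ≤ wgt ω E ∧
      ∀ (v w : V) (L : List (V × V)), IsWalkFrom v w L → (↑L : Multiset (V × V)) ≤ E' →
        IsPathOrCycle v w L := by
  by_cases hsimple : ∀ (v w : V) (L : List (V × V)), IsWalkFrom v w L →
      (↑L : Multiset (V × V)) ≤ E → IsPathOrCycle v w L
  · exact ⟨E, hE, le_rfl, hsimple⟩
  push Not at hsimple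
  obtain ⟨v, w, L, hL, hLE, hbad⟩ := hsimple
  obtain ⟨E₂, hE₂, hwgt, hcard⟩ :=
    exists_shorter_extension htri hE hL hLE (hasShortcut_of_not_isPathOrCycle hL hbad)
  obtain ⟨E', hE', hwgt', hsimple'⟩ := exists_extension_forall_isPathOrCycle htri E₂ hE₂
  exact ⟨E', hE', hwgt'.trans hwgt, hsimple'⟩
termination_by Multiset.card E

theorem exists_extension_with_simple_maximal_trails_general [DecidableEq V]
    (A : Multiset (V × V)) (ω : V × V → NNReal)
    -- triangle inequality (guaranteed by shortest-path preprocessing):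
    (htri : ∀ u v w : V, ω (u, w) ≤ ω (u, v) + ω (v, w))
    (E : Multiset (V × V))
    (hE : IsEulerian (A + E)) :
    ∃ E' : Multiset (V × V), IsEulerian (A + E') ∧ wgt ω E' ≤ wgt ω E ∧
      -- every maximal trail `(v, w, L)` in `E'` visits every vertex at most once
      ∀ (v w : V) (L : List (V × V)), IsWalkFrom v w L →
        (↑L : Multiset (V × V)) ≤ E' →
        (∀ a ∈ E' - (↑L : Multiset (V × V)), a.2 ≠ v ∧ a.1 ≠ w) →
        (L.map Prod.snd).Nodup ∧ (v = w ∨ v ∉ L.map Prod.snd) := by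
  obtain ⟨E', hE', hwgt, hsimple⟩ := exists_extension_forall_isPathOrCycle htri E hE
  exact ⟨E', hE', hwgt, fun v w L hL hLE _ => hsimple v w L hL hLE⟩

theorem exists_extension_with_simple_maximal_trails [DecidableEq V]
    (A : Multiset (V × V)) (ω : V × V → NNReal)
    -- triangle inequality (guaranteed by shortest-path preprocessing):
    (htri : ∀ u v w : V, ω (u, w) ≤ ω (u, v) + ω (v, w))
    (E : Multiset (V × V))
    -- `E` is a minimum-weight Eulerian extension of `G = (V, A)`:
    (hE : IsEulerian (A + E))
    (hmin : ∀ E'' : Multiset (V × V), IsEulerian (A + E'') → wgt ω E ≤ wgt ω E'') :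
    ∃ E' : Multiset (V × V), IsEulerian (A + E') ∧ wgt ω E' ≤ wgt ω E ∧
      -- every maximal trail `(v, w, L)` in `E'` visits every vertex at most once
      ∀ (v w : V) (L : List (V × V)), IsWalkFrom v w L →
        (↑L : Multiset (V × V)) ≤ E' →
        (∀ a ∈ E' - (↑L : Multiset (V × V)), a.2 ≠ v ∧ a.1 ≠ w) →
        (L.map Prod.snd).Nodup ∧ (v = w ∨ v ∉ L.map Prod.snd) :=
  exists_extension_with_simple_maximal_trails_general A ω htri E hE

end Stmt15
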